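/- Let P ∈ ℝ^{N×N} be a row-stochastic matrix and let α ∈ (0,1). Then the following are equivalent: (i) for every strict total order ≺ on {1,...,N} there exists a probability vector v such that the PageRank vector satisfies π(α,v)_i < π(α,v)_j whenever i ≺ j (ranking control); (ii) 1/α > max_j Σ_{i=1}^N P_{ij}. -/

import Mathlib

open Matrix

/-- `P` is row-stochastic: nonnegative entries, each row summing to 1. -/
def IsStochastic {N : ℕ} (P : Matrix (Fin N) (Fin N) ℝ) : Prop :=
  (∀ i j, 0 ≤ P i j) ∧ ∀ i, ∑ j, P i j = 1

/-- `v` is a probability vector: strictly positive entries summing to 1. -/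
def IsProbVec {N : ℕ} (v : Fin N → ℝ) : Prop :=
  (∀ i, 0 < v i) ∧ ∑ i, v i = 1

/-- The Google matrix `αP + (1-α) e vᵀ`. -/
def googleMatrix {N : ℕ} (α : ℝ) (P : Matrix (Fin N) (Fin N) ℝ) (v : Fin N → ℝ) :
    Matrix (Fin N) (Fin N) ℝ :=
  α • P + (1 - α) • Matrix.of fun _ j => v j

/-!
A probability vector `π` is the PageRank vector of some personalization `v` exactly when
`α (πᵀP)_j < π_j` for every node `j`, since the stationarity equation can be solved for
`v = (π - α πᵀP) / (1 - α)`. If `j` is the least node of a ranking, then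
`π_j > α ∑_i π_i P_{ij} ≥ α π_j ∑_i P_{ij}`, so the column sums of `P` must be below `1/α`.
Conversely, when they are, the all-ones vector satisfies these strict inequalities, hence so
does its perturbation `1 + t·rank` for small `t > 0`, where `rank i` counts the nodes below `i`;
normalizing it gives a PageRank vector realizing the ranking.
-/

open Filter Topology

theorem exists_isStrictTotalOrder_rel_of_ne {κ : Type*} [LinearOrder κ] (j : κ) :
    ∃ r : κ → κ → Prop, IsStrictTotalOrder κ r ∧ ∀ i, i ≠ j → r j i := by
  let key : κ → Bool ×ₗ κ := fun a => toLex (decide (a ≠ j), a)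
  have hkey : Function.Injective key := fun a b h => congrArg (·.2) h
  refine ⟨InvImage (· < ·) key, { InvImage.trichotomous hkey with }, fun i hi => ?_⟩
  simp [InvImage, key, Prod.Lex.toLex_lt_toLex, hi]

theorem ncard_setOf_rel_lt_ncard {κ : Type*} [Finite κ] {r : κ → κ → Prop} [IsStrictOrder κ r]
    {i j : κ} (hij : r i j) : {k | r k i}.ncard < {k | r k j}.ncard :=
  Set.ncard_lt_ncard ⟨fun _ hk => _root_.trans hk hij, fun hsub => irrefl_of r i (hsub hij)⟩

section

variable {ι : Type*} [Fintype ι]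

theorem mul_sum_col_lt_one_of_forall_le {P : Matrix ι ι ℝ} (hP : ∀ i j, 0 ≤ P i j)
    {α : ℝ} (hα : 0 ≤ α) {π : ι → ℝ} {j : ι} (hπj : 0 < π j) (hmin : ∀ i, π j ≤ π i)
    (hsub : α * vecMul π P j < π j) : α * ∑ i, P i j < 1 := by
  have hcol : π j * ∑ i, P i j ≤ vecMul π P j := by
    rw [vecMul_apply_eq_sum, Finset.mul_sum]
    exact Finset.sum_le_sum fun i _ => mul_le_mul_of_nonneg_right (hmin i) (hP i j)
  have : π j * (α * ∑ i, P i j) < π j * 1 :=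
    calc π j * (α * ∑ i, P i j) = α * (π j * ∑ i, P i j) := mul_left_comm _ _ _
      _ ≤ α * vecMul π P j := mul_le_mul_of_nonneg_left hcol hα
      _ < π j * 1 := by rwa [mul_one]
  exact lt_of_mul_lt_mul_left this hπj.le

theorem eventually_subinvariant_one_add_smul {P : Matrix ι ι ℝ} {α : ℝ}
    (hcol : ∀ j, α * ∑ i, P i j < 1) (f : ι → ℝ) :
    ∀ᶠ t in 𝓝 (0 : ℝ), ∀ j, 0 < 1 + t * f j ∧ α * vecMul (1 + t • f) P j < 1 + t * f j := by
  refine eventually_all.2 fun j => ?_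
  have hlin : ∀ t : ℝ, vecMul (1 + t • f) P j = ∑ i, P i j + t * vecMul f P j := fun t => by
    rw [add_vecMul, smul_vecMul]
    simp [vecMul_apply_eq_sum]
  simp_rw [hlin]
  exact (ContinuousAt.eventually_lt (by fun_prop) (by fun_prop) (by simp)).and
    (ContinuousAt.eventually_lt (by fun_prop) (by fun_prop) (by simpa using hcol j))

theorem exists_pos_subinvariant_lt_of_rel {P : Matrix ι ι ℝ} {α : ℝ}
    (hcol : ∀ j, α * ∑ i, P i j < 1) (r : ι → ι → Prop) [IsStrictOrder ι r] :
    ∃ w : ι → ℝ, (∀ i, 0 < w i) ∧ (∀ j, α * vecMul w P j < w j) ∧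
      ∀ i j, r i j → w i < w j := by
  let rank : ι → ℝ := fun i => {k | r k i}.ncard
  obtain ⟨t, hw, ht⟩ := ((eventually_subinvariant_one_add_smul hcol rank).filter_mono
    nhdsWithin_le_nhds |>.and self_mem_nhdsWithin).exists (f := 𝓝[>] 0)
  refine ⟨1 + t • rank, fun i => (hw i).1, fun j => (hw j).2, fun i j hij => ?_⟩
  have : rank i < rank j := Nat.cast_lt.2 (ncard_setOf_rel_lt_ncard hij)
  simpa using mul_lt_mul_of_pos_left this ht

end

section

variable {N : ℕ} {P : Matrix (Fin N) (Fin N) ℝ} {α : ℝ}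

theorem vecMul_googleMatrix {π : Fin N → ℝ} (hπ : ∑ i, π i = 1) (v : Fin N → ℝ) :
    vecMul π (googleMatrix α P v) = α • vecMul π P + (1 - α) • v := by
  ext j
  simp only [googleMatrix, vecMul_apply_eq_sum, Matrix.add_apply, Matrix.smul_apply, of_apply,
    smul_eq_mul, mul_add, Finset.sum_add_distrib, Pi.add_apply, Pi.smul_apply, Finset.mul_sum]
  rw [← Finset.sum_mul, hπ, one_mul]
  exact congrArg (· + _) (Finset.sum_congr rfl fun i _ => mul_left_comm _ _ _)

theorem IsStochastic.sum_vecMul (hP : IsStochastic P) (π : Fin N → ℝ) :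
    ∑ j, vecMul π P j = ∑ i, π i := by
  simp_rw [vecMul_apply_eq_sum]
  rw [Finset.sum_comm]
  simp [← Finset.mul_sum, hP.2]

theorem exists_isProbVec_vecMul_googleMatrix_eq_iff (hP : IsStochastic P)
    (hα : α ∈ Set.Ioo (0 : ℝ) 1) {π : Fin N → ℝ} (hπ : IsProbVec π) :
    (∃ v, IsProbVec v ∧ vecMul π (googleMatrix α P v) = π) ↔
      ∀ j, α * vecMul π P j < π j := by
  have h1α : 0 < 1 - α := sub_pos.2 hα.2
  simp_rw [vecMul_googleMatrix hπ.2, funext_iff, Pi.add_apply, Pi.smul_apply, smul_eq_mul]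
  constructor
  · rintro ⟨v, hv, hfix⟩ j
    nlinarith [hfix j, hv.1 j]
  · intro hsub
    refine ⟨fun j => (π j - α * vecMul π P j) / (1 - α), ⟨fun j => ?_, ?_⟩, fun j => ?_⟩
    · exact div_pos (sub_pos.2 (hsub j)) h1α
    · rw [← Finset.sum_div, Finset.sum_sub_distrib, ← Finset.mul_sum, hP.sum_vecMul, hπ.2,
        mul_one, div_self h1α.ne']
    · field_simp
      ring

theorem exists_pageRank_of_subinvariant (hN : 0 < N) (hP : IsStochastic P)
    (hα : α ∈ Set.Ioo (0 : ℝ) 1) {w : Fin N → ℝ} (hw : ∀ i, 0 < w i)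
    (hsub : ∀ j, α * vecMul w P j < w j) :
    ∃ v π : Fin N → ℝ, IsProbVec v ∧ IsProbVec π ∧
      vecMul π (googleMatrix α P v) = π ∧ ∀ i j, w i < w j → π i < π j := by
  have : Nonempty (Fin N) := ⟨⟨0, hN⟩⟩
  have hW : 0 < ∑ i, w i := Finset.sum_pos (fun i _ => hw i) Finset.univ_nonempty
  have hc := inv_pos.2 hW
  have hπ : IsProbVec ((∑ i, w i)⁻¹ • w) := by
    refine ⟨fun i => mul_pos hc (hw i), ?_⟩
    simp only [Pi.smul_apply, smul_eq_mul]
    rw [← Finset.mul_sum, inv_mul_cancel₀ hW.ne']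
  obtain ⟨v, hv, hfix⟩ := (exists_isProbVec_vecMul_googleMatrix_eq_iff hP hα hπ).2 fun j => by
    simpa [smul_vecMul, mul_left_comm α] using mul_lt_mul_of_pos_left (hsub j) hc
  exact ⟨v, _, hv, hπ, hfix, fun i j hij => mul_lt_mul_of_pos_left hij hc⟩

end

/-- For a row-stochastic `P` on `N ≥ 1` nodes and `α ∈ (0,1)`, the following
are equivalent: (i) for every strict total order `≺` on the nodes there is a probability
vector `v` whose PageRank vector `π` (the probability vector fixed by the Google matrix)
satisfies `π i < π j` whenever `i ≺ j`; (ii) `1/α > max_j ∑_i P_{ij}`, i.e.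
`∑_i P_{ij} < 1/α` for every column `j`. -/
theorem ranking_control_characterization {N : ℕ} (hN : 0 < N)
    (P : Matrix (Fin N) (Fin N) ℝ) (hP : IsStochastic P)
    (α : ℝ) (hα : α ∈ Set.Ioo (0 : ℝ) 1) :
    (∀ r : Fin N → Fin N → Prop, IsStrictTotalOrder (Fin N) r →
        ∃ v π : Fin N → ℝ, IsProbVec v ∧ IsProbVec π ∧
          Matrix.vecMul π (googleMatrix α P v) = π ∧
          ∀ i j, r i j → π i < π j) ↔
      (∀ j, ∑ i, P i j < 1 / α) := by
  simp_rw [lt_div_iff₀' hα.1]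
  constructor
  · intro hrank j
    obtain ⟨r, hr, hjr⟩ := exists_isStrictTotalOrder_rel_of_ne j
    obtain ⟨v, π, hv, hπ, hfix, hπr⟩ := hrank r hr
    have hmin : ∀ i, π j ≤ π i := fun i =>
      (eq_or_ne i j).elim (fun h => h ▸ le_rfl) fun h => (hπr j i (hjr i h)).le
    have hsub := (exists_isProbVec_vecMul_googleMatrix_eq_iff hP hα hπ).1 ⟨v, hv, hfix⟩ j
    exact mul_sum_col_lt_one_of_forall_le hP.1 hα.1.le (hπ.1 j) hmin hsub
  · intro hcol r hr
    obtain ⟨w, hw, hsub, hwr⟩ := exists_pos_subinvariant_lt_of_rel hcol r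
    obtain ⟨v, π, hv, hπ, hfix, hπw⟩ := exists_pageRank_of_subinvariant hN hP hα hw hsub
    exact ⟨v, π, hv, hπ, hfix, fun i j hij => hπw i j (hwr i j hij)⟩
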